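/- Let X and Y be topological spaces, (J_n)_{n∈ℕ} a sequence of functions from X × Y to [0,+∞], J_∞ : X × Y → [0,+∞], (E_n)_{n∈ℕ} a sequence of subsets of X × Y, and E_∞ ⊆ X × Y. Assume conditions (A) and (B): for every (x,y) ∈ X × Y, (A) the infimum over all sequences xⁿ → x of ( the supremum over all sequences yⁿ → y of limsup_{n→∞} J_n(xⁿ,yⁿ) ) and the infimum over all sequences xⁿ → x of ( the infimum over all sequences yⁿ → y of liminf_{n→∞} J_n(xⁿ,yⁿ) ) both equal J_∞(x,y); (B) the supremum over all sequences xⁿ → x of ( the infimum over all sequences yⁿ → y of limsup_{n→∞} 1_{E_n}(xⁿ,yⁿ) ) and the infimum over all sequences xⁿ → x of ( the infimum over all sequences yⁿ → y of liminf_{n→∞} 1_{E_n}(xⁿ,yⁿ) ) both equal 1_{E_∞}(x,y). Suppose that for every n, (x_n, y_n) ∈ X × Y satisfies (J_n + 1_{E_n})(x_n, y_n) = inf_{X×Y} (J_n + 1_{E_n}), and that x_n → x_∞ in X and y_n → y_∞ in Y. Then (x_∞, y_∞) is a minimizer of J_∞ + 1_{E_∞} over X × Y, and moreover (J_∞ +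 1_{E_∞})(x_∞, y_∞) = inf_{X×Y} (J_∞ + 1_{E_∞}) = lim_{n→∞} inf_{X×Y} (J_n + 1_{E_n}). -/

import Mathlib

/-!
Write `F n = J n + 1_{E n}` and `F∞ = Jinf + 1_{Einf}`. Condition (A2) + (B2) along the minimizers
gives the lower bound `F∞ (x∞, y∞) ≤ liminf (inf F n)`. For the upper bound at a point `(x, y)`
of `Einf` and any `u → x`, condition (B1) yields `v → y` with `(u n, v n) ∈ E n` eventually, so
`inf F n ≤ J n (u n, v n)` eventually, and (A1) turns this into `limsup (inf F n) ≤ Jinf (x, y)`.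
The two bounds squeeze `inf F n` and force `(x∞, y∞)` to be a minimizer.
-/

open Filter Topology
open scoped ENNReal

open Classical in
/-- The `[0, +∞]`-valued indicator of a set: `0` on the set and `+∞` off it. -/
noncomputable def eIndicator {Z : Type*} (E : Set Z) (z : Z) : ℝ≥0∞ :=
  if z ∈ E then 0 else ⊤

theorem ENNReal.le_liminf_add {ι : Type*} {l : Filter ι} (u v : ι → ℝ≥0∞) :
    liminf u l + liminf v l ≤ liminf (u + v) l := by
  simp only [liminf_eq_iSup_iInf]
  refine biSup_add_biSup_le' ⟨Set.univ, univ_mem⟩ ⟨Set.univ, univ_mem⟩ fun s hs t ht => ?_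
  exact le_iSup₂_of_le (s ∩ t) (inter_mem hs ht) <|
    le_iInf₂ fun a ha => add_le_add (iInf₂_le a ha.1) (iInf₂_le a ha.2)

theorem eq_iInf_and_tendsto_of_le_liminf_of_limsup_le {ι Z α : Type*} [CompleteLinearOrder α]
    [TopologicalSpace α] [OrderTopology α] {l : Filter ι} [l.NeBot] {m : ι → α} {G : Z → α}
    {z : Z} (hlower : G z ≤ liminf m l) (hupper : ∀ w, limsup m l ≤ G w) :
    G z = ⨅ w, G w ∧ Tendsto m l (𝓝 (⨅ w, G w)) := by
  have hsup : limsup m l ≤ ⨅ w, G w := le_iInf hupper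
  have hinf : ⨅ w, G w ≤ G z := iInf_le G z
  exact ⟨le_antisymm (hlower.trans (le_trans liminf_le_limsup hsup)) hinf,
    tendsto_of_le_liminf_of_limsup_le (hinf.trans hlower) hsup⟩

section eIndicator

variable {Z : Type*} {E : Set Z} {z : Z}

theorem eIndicator_of_mem (h : z ∈ E) : eIndicator E z = 0 := if_pos h

theorem eIndicator_of_notMem (h : z ∉ E) : eIndicator E z = ⊤ := if_neg h

theorem eIndicator_lt_top_iff : eIndicator E z < ⊤ ↔ z ∈ E := by
  by_cases h : z ∈ E <;> simp [eIndicator, h]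

theorem eventually_mem_of_limsup_eIndicator_lt_top {ι : Type*} {l : Filter ι} {E : ι → Set Z}
    {w : ι → Z} (h : limsup (fun i => eIndicator (E i) (w i)) l < ⊤) : ∀ᶠ i in l, w i ∈ E i :=
  (eventually_lt_of_limsup_lt h).mono fun _ hi => eIndicator_lt_top_iff.1 hi

theorem limsup_iInf_add_eIndicator_le_limsup {ι : Type*} {l : Filter ι} (J : ι → Z → ℝ≥0∞)
    {E : ι → Set Z} {w : ι → Z} (hw : ∀ᶠ i in l, w i ∈ E i) :
    limsup (fun i => ⨅ z, J i z + eIndicator (E i) z) l ≤ limsup (fun i => J i (w i)) l :=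
  limsup_le_limsup <| hw.mono fun i hi =>
    (iInf_le _ (w i)).trans_eq (by rw [eIndicator_of_mem hi, add_zero])

end eIndicator

section Recovery

variable {X Y : Type*} [TopologicalSpace X] [TopologicalSpace Y]
  {J : ℕ → X × Y → ℝ≥0∞} {Jinf : X × Y → ℝ≥0∞} {E : ℕ → Set (X × Y)} {Einf : Set (X × Y)}
  {x : X} {y : Y}

theorem exists_tendsto_eventually_mem_of_iSup_iInf_limsup_eIndicator
    (hB : (⨆ (u : ℕ → X) (_ : Tendsto u atTop (𝓝 x)),
      ⨅ (v : ℕ → Y) (_ : Tendsto v atTop (𝓝 y)),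
        limsup (fun n => eIndicator (E n) (u n, v n)) atTop) = eIndicator Einf (x, y))
    (hxy : (x, y) ∈ Einf) {u : ℕ → X} (hu : Tendsto u atTop (𝓝 x)) :
    ∃ v : ℕ → Y, Tendsto v atTop (𝓝 y) ∧ ∀ᶠ n in atTop, (u n, v n) ∈ E n := by
  have hlt : ⨅ (v : ℕ → Y) (_ : Tendsto v atTop (𝓝 y)),
      limsup (fun n => eIndicator (E n) (u n, v n)) atTop < ⊤ :=
    calc _ ≤ eIndicator Einf (x, y) := hB ▸ le_iSup₂ (f := fun u (_ : Tendsto u atTop (𝓝 x)) =>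
            ⨅ (v : ℕ → Y) (_ : Tendsto v atTop (𝓝 y)),
              limsup (fun n => eIndicator (E n) (u n, v n)) atTop) u hu
      _ = 0 := eIndicator_of_mem hxy
      _ < ⊤ := ENNReal.zero_lt_top
  simp only [iInf_lt_iff] at hlt
  obtain ⟨v, hv, hlim⟩ := hlt
  exact ⟨v, hv, eventually_mem_of_limsup_eIndicator_lt_top hlim⟩

theorem limsup_iInf_add_eIndicator_le
    (hA : (⨅ (u : ℕ → X) (_ : Tendsto u atTop (𝓝 x)),
      ⨆ (v : ℕ → Y) (_ : Tendsto v atTop (𝓝 y)),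
        limsup (fun n => J n (u n, v n)) atTop) = Jinf (x, y))
    (hB : (⨆ (u : ℕ → X) (_ : Tendsto u atTop (𝓝 x)),
      ⨅ (v : ℕ → Y) (_ : Tendsto v atTop (𝓝 y)),
        limsup (fun n => eIndicator (E n) (u n, v n)) atTop) = eIndicator Einf (x, y)) :
    limsup (fun n => ⨅ z, J n z + eIndicator (E n) z) atTop
      ≤ Jinf (x, y) + eIndicator Einf (x, y) := by
  by_cases hxy : (x, y) ∈ Einf
  · rw [eIndicator_of_mem hxy, add_zero, ← hA]
    refine le_iInf₂ fun u hu => ?_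
    obtain ⟨v, hv, hmem⟩ := exists_tendsto_eventually_mem_of_iSup_iInf_limsup_eIndicator hB hxy hu
    exact (limsup_iInf_add_eIndicator_le_limsup J hmem).trans <|
      le_iSup₂ (f := fun v (_ : Tendsto v atTop (𝓝 y)) => limsup (fun n => J n (u n, v n)) atTop)
        v hv
  · rw [eIndicator_of_notMem hxy, add_top]
    exact le_top

end Recovery

/-- convergence of minimizers for `J n + 1_{E n}`.
Under the sequential Γ-convergence hypotheses (A) and (B), if `(x n, y n)` are
minimizers of `J n + 1_{E n}` and `x n → x∞`, `y n → y∞`, then `(x∞, y∞)` is a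
minimizer of `J∞ + 1_{E∞}`, and the sequence of infima converges to the infimum
of `J∞ + 1_{E∞}`. -/
theorem minimizers_converge_of_gammaSeq {X Y : Type*}
    [TopologicalSpace X] [TopologicalSpace Y]
    (J : ℕ → X × Y → ℝ≥0∞) (Jinf : X × Y → ℝ≥0∞)
    (E : ℕ → Set (X × Y)) (Einf : Set (X × Y))
    (hA1 : ∀ (x : X) (y : Y),
      (⨅ (u : ℕ → X) (_ : Tendsto u atTop (𝓝 x)),
        ⨆ (v : ℕ → Y) (_ : Tendsto v atTop (𝓝 y)),
          limsup (fun n => J n (u n, v n)) atTop) = Jinf (x, y))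
    (hA2 : ∀ (x : X) (y : Y),
      (⨅ (u : ℕ → X) (_ : Tendsto u atTop (𝓝 x)),
        ⨅ (v : ℕ → Y) (_ : Tendsto v atTop (𝓝 y)),
          liminf (fun n => J n (u n, v n)) atTop) = Jinf (x, y))
    (hB1 : ∀ (x : X) (y : Y),
      (⨆ (u : ℕ → X) (_ : Tendsto u atTop (𝓝 x)),
        ⨅ (v : ℕ → Y) (_ : Tendsto v atTop (𝓝 y)),
          limsup (fun n => eIndicator (E n) (u n, v n)) atTop) = eIndicator Einf (x, y))
    (hB2 : ∀ (x : X) (y : Y),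
      (⨅ (u : ℕ → X) (_ : Tendsto u atTop (𝓝 x)),
        ⨅ (v : ℕ → Y) (_ : Tendsto v atTop (𝓝 y)),
          liminf (fun n => eIndicator (E n) (u n, v n)) atTop) = eIndicator Einf (x, y))
    (xs : ℕ → X) (ys : ℕ → Y) (xinf : X) (yinf : Y)
    (hmin : ∀ n : ℕ, J n (xs n, ys n) + eIndicator (E n) (xs n, ys n)
      = ⨅ z : X × Y, (J n z + eIndicator (E n) z))
    (hx : Tendsto xs atTop (𝓝 xinf)) (hy : Tendsto ys atTop (𝓝 yinf)) :
    (Jinf (xinf, yinf) + eIndicator Einf (xinf, yinf)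
        = ⨅ z : X × Y, (Jinf z + eIndicator Einf z)) ∧
    Tendsto (fun n => ⨅ z : X × Y, (J n z + eIndicator (E n) z)) atTop
      (𝓝 (⨅ z : X × Y, (Jinf z + eIndicator Einf z))) := by
  refine eq_iInf_and_tendsto_of_le_liminf_of_limsup_le (G := fun z => Jinf z + eIndicator Einf z)
    ?_ fun ⟨x, y⟩ => limsup_iInf_add_eIndicator_le (hA1 x y) (hB1 x y)
  calc Jinf (xinf, yinf) + eIndicator Einf (xinf, yinf)
      ≤ liminf (fun n => J n (xs n, ys n)) atTop
        + liminf (fun n => eIndicator (E n) (xs n, ys n)) atTop :=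
        add_le_add (hA2 xinf yinf ▸ iInf₂_le_of_le xs hx (iInf₂_le ys hy))
          (hB2 xinf yinf ▸ iInf₂_le_of_le xs hx (iInf₂_le ys hy))
    _ ≤ liminf (fun n => J n (xs n, ys n) + eIndicator (E n) (xs n, ys n)) atTop :=
        ENNReal.le_liminf_add _ _
    _ = liminf (fun n => ⨅ z, J n z + eIndicator (E n) z) atTop := by simp only [hmin]
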